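/- arXiv:2409.13131 — 5 statements merged into one kernel-verified Lean document; each statement's English description precedes it below -/
import Mathlib

section
/- Let C be an LCCDC category and let f : x → y be a morphism. Let ∇_x : x ⨿ x → x and ∇_y : y ⨿ y → y be the codiagonal morphisms. Then the square with top f ⨿ f : x ⨿ x → y ⨿ y, left ∇_x, right ∇_y, bottom f, is cartesian. -/
/-!
In `Over y` the codiagonal `∇_y` is the coproduct `T ⨿ T` of the terminal object `T = 𝟙 y`, and
for `A = Over.mk f` the coproduct `A ⨿ A` is `x ⨿ x` over `y`. Since `Over y` is cartesian
closed, `A ⊗ -` is a left adjoint and so `A ⊗ (T ⨿ T) ≅ (A ⊗ T) ⨿ (A ⊗ T) ≅ A ⨿ A`; the two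
projections of this product are `∇_x` and `f ⨿ f`. Binary products in `Over y` are pullbacks
in `C`.
-/

open CategoryTheory CategoryTheory.Limits

section

open MonoidalCategory CartesianMonoidalCategory

variable {D : Type*} [Category D] [CartesianMonoidalCategory D]

noncomputable def isLimitBinaryFanCodiag {A T P B : D} (hT : IsTerminal T)
    {j₁ j₂ : A ⟶ P} (hP : IsColimit (BinaryCofan.mk j₁ j₂))
    {i₁ i₂ : T ⟶ B} (hB : IsColimit (BinaryCofan.mk i₁ i₂))
    [PreservesColimit (pair T T) (tensorLeft A)]
    {p : P ⟶ A} {q : P ⟶ B} (hp₁ : j₁ ≫ p = 𝟙 A) (hp₂ : j₂ ≫ p = 𝟙 A)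
    (hq₁ : j₁ ≫ q = hT.from A ≫ i₁) (hq₂ : j₂ ≫ q = hT.from A ≫ i₂) :
    IsLimit (BinaryFan.mk p q) := by
  let e : A ⟶ A ⊗ T := lift (𝟙 A) (hT.from A)
  have : IsIso e := ⟨fst A T, by simp [e], by ext; simp [e]; exact hT.hom_ext _ _⟩
  have hAB : IsColimit (BinaryCofan.mk (A ◁ i₁) (A ◁ i₂)) :=
    isColimitMapCoconeBinaryCofanEquiv _ _ _ (isColimitOfPreserves (tensorLeft A) hB)
  have hAB' := BinaryCofan.isColimitCompRightIso _ e (BinaryCofan.isColimitCompLeftIso _ e hAB)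
  let φ : BinaryCofan.mk j₁ j₂ ⟶ BinaryCofan.mk (e ≫ A ◁ i₁) (e ≫ A ◁ i₂) :=
    { hom := lift p q
      w := by
        rintro ⟨⟨⟩⟩
        · change j₁ ≫ lift p q = e ≫ A ◁ i₁
          simp [e, hp₁, hq₁]
        · change j₂ ≫ lift p q = e ≫ A ◁ i₂
          simp [e, hp₂, hq₂] }
  have : IsIso φ := IsColimit.hom_isIso hP hAB' φ
  have : IsIso (lift p q) := (Cocone.forget _).map_isIso φ
  exact IsLimit.ofPointIso (tensorProductIsBinaryProduct A B) (i := this)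

end

namespace CategoryTheory.Over

noncomputable def isColimitBinaryCofanCoprod {C : Type*} [Category C] [HasBinaryCoproducts C]
    {y z w : C} (g : z ⟶ y) (h : w ⟶ y) :
    IsColimit (BinaryCofan.mk
      (homMk coprod.inl (coprod.inl_desc g h) : mk g ⟶ mk (coprod.desc g h))
      (homMk coprod.inr (coprod.inr_desc g h) : mk h ⟶ mk (coprod.desc g h))) :=
  isColimitOfReflects (forget y)
    ((isColimitMapCoconeBinaryCofanEquiv _ _ _).symm (coprodIsCoprod z w))

end CategoryTheory.Over

/-- Let `C` be an LCCDC category and `f : x ⟶ y` a morphism.  The square with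
top `f ⨿ f`, left the codiagonal `∇_x`, right the codiagonal `∇_y`, and bottom `f`, is
cartesian. -/
theorem stmt_8 {C : Type u} [Category.{v} C]
    [∀ x : C, CartesianMonoidalCategory (Over x)] [∀ x : C, MonoidalClosed (Over x)]
    [HasFiniteCoproducts C] [BinaryCoproductsDisjoint C]
    {x y : C} (f : x ⟶ y) :
    IsPullback (coprod.map f f) (coprod.desc (𝟙 x) (𝟙 x)) (coprod.desc (𝟙 y) (𝟙 y)) f := by
  have hfan := isLimitBinaryFanCodiag Over.mkIdTerminal
    (Over.isColimitBinaryCofanCoprod f f) (Over.isColimitBinaryCofanCoprod (𝟙 y) (𝟙 y))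
    (p := Over.homMk (coprod.desc (𝟙 x) (𝟙 x))) (q := Over.homMk (coprod.map f f))
    (by ext; exact coprod.inl_desc _ _) (by ext; exact coprod.inr_desc _ _)
    (by ext; simp) (by ext; simp)
  exact (Over.isPullback_of_binaryFan_isLimit _ hfan).flip
end

section
/- Let i : x → y be an epimorphism in an LCCDC category C. Then the dependent product functor Π_i : C/x → C/y sends initial objects to initial objects. -/
/-!
Write `P := Π_i A` with `A` initial. The counit `i^* P ⟶ A` is an isomorphism because initial
objects of the cartesian closed category `C/x` are strict. Seen in `C/y`, `i^* P` is the product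
`P × i`, whose first projection is epi: `i ⟶ 1` is epi and `P × -` is a left adjoint. So `P` is an
epimorphic image of an initial object, the two injections `P ⟶ P ⨿ P` coincide, and disjointness
of coproducts forces `P` to be initial.
-/

open CategoryTheory CategoryTheory.Limits

namespace CategoryTheory

open MonoidalCategory CartesianMonoidalCategory

variable {C : Type*} [Category C]

noncomputable def Limits.IsInitial.ofCoprodInlEqInr [BinaryCoproductsDisjoint C] {P : C}
    [HasBinaryCoproduct P P] (h : (coprod.inl : P ⟶ P ⨿ P) = coprod.inr) : IsInitial P :=
  have hpb : IsPullback (𝟙 P) (𝟙 P) (coprod.inl : P ⟶ P ⨿ P) coprod.inr :=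
    h ▸ IsKernelPair.id_of_mono coprod.inl
  IsInitial.ofBinaryCoproductDisjointOfIsLimit hpb.cone hpb.isLimit

theorem CartesianMonoidalCategory.epi_fst_of_epi_toUnit [CartesianMonoidalCategory C] (A B : C)
    [Closed A] [Epi (toUnit B)] : Epi (fst A B) := by
  have : (tensorLeft A).PreservesEpimorphisms :=
    Functor.preservesEpimorphisms_of_adjunction (ihom.adjunction A)
  have : Epi (A ◁ toUnit B) := (tensorLeft A).map_epi (toUnit B)
  rw [← whiskerLeft_toUnit_comp_rightUnitor_hom]
  exact epi_comp _ _

-- The objects are spelled out so that instance search sees `c.fst : c.pt ⟶ A`, not the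
-- defeq but non-reducibly-equal `(pair A B).obj ⟨.left⟩`.
theorem Limits.BinaryFan.epi_fst_of_isLimit [CartesianMonoidalCategory C] {A B : C} [Closed A]
    [Epi (toUnit B)] {c : BinaryFan A B} (hc : IsLimit c) : @Epi _ _ c.pt A c.fst := by
  have e : (hc.conePointUniqueUpToIso (tensorProductIsBinaryProduct A B)).hom ≫
      CartesianMonoidalCategory.fst A B = c.fst :=
    hc.conePointUniqueUpToIso_hom_comp (tensorProductIsBinaryProduct A B) ⟨.left⟩
  rw [← e]
  exact epi_comp' inferInstance (epi_fst_of_epi_toUnit A B)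

namespace Over

theorem epi_toUnit_mk {x y : C} [CartesianMonoidalCategory (Over y)] (i : x ⟶ y) [Epi i] :
    Epi (toUnit (mk i)) := by
  have : Epi (homMk i (by simp) : mk i ⟶ mk (𝟙 y)) := epi_of_epi_left (hk := ‹Epi i›) _
  rw [toUnit_unique (toUnit _) (homMk i ≫ (mkIdTerminal.uniqueUpToIso isTerminalTensorUnit).hom)]
  exact epi_comp _ _

noncomputable def isInitialOfEpi [HasBinaryCoproducts C] [BinaryCoproductsDisjoint C] {y : C}
    {Z P : Over y} (f : Z ⟶ P) [Epi f] (hZ : IsInitial Z) : IsInitial P :=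
  IsInitial.isInitialOfObj (forget y) _ <| IsInitial.ofCoprodInlEqInr <|
    congrArg CommaMorphism.left <| (cancel_epi f).1 <| hZ.hom_ext
      (f ≫ (homMk coprod.inl (coprod.inl_desc _ _) : P ⟶ mk (coprod.desc P.hom P.hom)))
      (f ≫ homMk coprod.inr (coprod.inr_desc _ _))

end Over

end CategoryTheory

/-- Let `i : x ⟶ y` be an epimorphism in an LCCDC category `C`.  Then the
dependent product functor `Π_i : C/x ⥤ C/y` (any right adjoint of pullback `i^*`) sends initial
objects to initial objects. -/
theorem stmt_10 {C : Type u} [Category.{v} C] [HasPullbacks C]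
    [∀ x : C, CartesianMonoidalCategory (Over x)] [∀ x : C, MonoidalClosed (Over x)]
    [HasFiniteCoproducts C] [BinaryCoproductsDisjoint C]
    {x y : C} (i : x ⟶ y) [Epi i]
    (Pi : Over x ⥤ Over y) (adj : Over.pullback i ⊣ Pi) :
    ∀ A : Over x, IsInitial A → Nonempty (IsInitial (Pi.obj A)) := by
  intro A hA
  have hPullback : IsInitial ((Over.pullback i).obj (Pi.obj A)) :=
    haveI := strict_initial hA (adj.counit.app A)
    hA.ofIso (asIso (adj.counit.app A)).symm
  let c := pullbackConeEquivBinaryFan.functor.obj (pullback.cone (Pi.obj A).hom i)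
  have hc : IsLimit c := (pullback.isLimit _ _).pullbackConeEquivBinaryFanFunctor
  -- `c.pt` and `i^* (Pi.obj A)` have the same underlying object `pullback (Pi.obj A).hom i`.
  have hcInitial : IsInitial c.pt :=
    IsInitial.isInitialOfObj (Over.forget y) _ (hPullback.isInitialObj (Over.forget x))
  have := Over.epi_toUnit_mk i
  have := BinaryFan.epi_fst_of_isLimit hc
  exact ⟨Over.isInitialOfEpi c.fst hcInitial⟩
end

section
/- Let D and D' be categories such that D admits binary pullbacks, let F : D → D' be left adjoint to G : D' → D with unit η, and let d ∈ D. Then the induced functor F/d : D/d → D'/Fd is left adjoint to the composite η_d^* ∘ (G/Fd) : D'/Fd → D/d, where η_d^* is pullback along the unit η_d : d → GFd. -/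
open CategoryTheory CategoryTheory.Limits

/-- Let `D` admit binary pullbacks, let `F ⊣ G` with unit `η`, and let `d ∈ D`.
Then `F/d : D/d ⥤ D'/Fd` is left adjoint to `η_d^* ∘ (G/Fd) : D'/Fd ⥤ D/d`. -/
theorem stmt_14 {D : Type u₁} {D' : Type u₂} [Category.{v₁} D] [Category.{v₂} D']
    [HasPullbacks D] (F : D ⥤ D') (G : D' ⥤ D) (adj : F ⊣ G) (d : D) :
    Nonempty (Over.post F (X := d) ⊣ (Over.post G ⋙ Over.pullback (adj.unit.app d))) :=
  ⟨Over.postAdjunctionLeft adj⟩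
end

section
/- Let C be a locally cartesian closed category, i : x → y a morphism, and b an object of C/y. Then pullback along the counit ε^ind_b : Σ_i i^* b → b, as a functor (C/y)/b → (C/y)/(Σ_i i^* b), is equal (naturally isomorphic) to the functor induced by Σ_i ∘ i^* on slices, i.e., (Σ_i ∘ i^*)/b. -/
open CategoryTheory CategoryTheory.Limits

/-!
The counit `ε` of `Over.map i ⊣ Over.pullback i` is equifibered: its naturality square at
`g : a ⟶ b` is a pullback, by pasting the squares defining `i^* a` and `i^* b`. For any
equifibered `α : F ⟶ G`, pulling `G g` back along `α_b` recovers `F g`, naturally in `g`;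
taking `G = 𝟭` gives the theorem.
-/

namespace CategoryTheory.Over

variable {D E : Type*} [Category* D] [Category* E]

noncomputable def postIsoPostCompPullback {F G : D ⥤ E} {α : F ⟶ G}
    (hα : NatTrans.Equifibered α) (b : D) [HasPullbacksAlong (α.app b)] :
    post F ≅ post G ⋙ pullback (α.app b) :=
  NatIso.ofComponents (fun g => isoMk (hα g.hom).flip.isoPullback
      (hα g.hom).flip.isoPullback_hom_snd) fun f => by
    ext
    apply pullback.hom_ext
    · erw [Category.assoc, Category.assoc, IsPullback.isoPullback_hom_fst, pullback.lift_fst,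
        IsPullback.isoPullback_hom_fst_assoc]
      exact α.naturality f.left
    · erw [Category.assoc, Category.assoc, IsPullback.isoPullback_hom_snd, pullback.lift_snd,
        IsPullback.isoPullback_hom_snd]
      exact (F.map_comp _ _).symm.trans (congrArg F.map (Over.w f))

theorem mapPullbackAdj_counit_equifibered {C : Type*} [Category* C] {x y : C} (i : x ⟶ y)
    [HasPullbacksAlong i] : NatTrans.Equifibered (mapPullbackAdj i).counit := by
  intro a b g
  have outer : IsPullback (pullback.snd a.hom i) (pullback.fst a.hom i) i (g.left ≫ b.hom) := by
    rw [Over.w g]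
    exact (IsPullback.of_hasPullback _ _).flip
  have left := IsPullback.of_right
    (h₁₁ := pullback.lift (pullback.fst a.hom i ≫ g.left) (pullback.snd a.hom i)
      (by simp [pullback.condition]))
    (by rwa [pullback.lift_snd]) (pullback.lift_fst _ _ _) (IsPullback.of_hasPullback b.hom i).flip
  exact IsPullback.of_map_of_faithful (Over.forget y) (by simpa using left)

end CategoryTheory.Over

/-- Let `C` be locally cartesian closed, `i : x ⟶ y`, and `b ∈ C/y`.  Pullback
along the counit `ε^ind_b : Σ_i i^* b ⟶ b`, as a functor `(C/y)/b ⥤ (C/y)/(Σ_i i^* b)`, is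
naturally isomorphic to the functor `(Σ_i ∘ i^*)/b` induced on slices. -/
theorem stmt_17 {C : Type u} [Category.{v} C] [HasPullbacks C]
    [∀ x : C, CartesianMonoidalCategory (Over x)] [∀ x : C, MonoidalClosed (Over x)]
    {x y : C} (i : x ⟶ y) (b : Over y) :
    Nonempty (Over.pullback ((Over.mapPullbackAdj i).counit.app b) ≅
      Over.post (Over.pullback i ⋙ Over.map i) (X := b)) :=
  -- `Over.post (𝟭 _) ⋙ P` is definitionally `P`.
  ⟨(Over.postIsoPostCompPullback (Over.mapPullbackAdj_counit_equifibered i) b).symm⟩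
end

section
/- Let C be a locally cartesian closed category, i : x → y a morphism, and b an object of C/y. Then the functors Π_{ε^ind_b} ∘ (Σ_i / i^* b) and (η^coind_b)^* ∘ (Π_i / i^* b), both from (C/x)/(i^* b) to (C/y)/b, are naturally isomorphic. -/
/-!
Both functors are right adjoint to `Over.post (Over.pullback i) : (C/y)/b ⥤ (C/x)/(i^* b)`.
For `(η^coind_b)^* ∘ (Π_i / i^* b)` this is `Over.postAdjunctionLeft`. For the other functor,
`Σ_i / i^* b` is an equivalence (both sides are slices of `C` over the object underlying `i^* b`),
so its left adjoint is its inverse, and `ε^ind_b`-pullback followed by that inverse is right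
adjoint to `(Σ_i / i^* b) ⋙ Σ_{ε^ind_b}`, which is left adjoint to `Over.post (Over.pullback i)`
by `Over.postAdjunctionRight`.
-/

open CategoryTheory CategoryTheory.Limits

namespace CategoryTheory.Over

universe v u

variable {C : Type u} [Category.{v} C] {x y : C}

def postMapEquiv (i : x ⟶ y) (u : Over x) : Over u ≌ Over ((Over.map i).obj u) :=
  (u.iteratedSliceEquiv.trans ((Over.map i).obj u).iteratedSliceEquiv.symm).changeFunctor
    (G := Over.post (Over.map i))
    (NatIso.ofComponents
      (fun A => Over.isoMk
        (Over.isoMk (Iso.refl _)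
          ((Category.id_comp _).trans ((Over.w A.hom =≫ i).symm.trans (Category.assoc _ _ _))))
        (by ext; exact Category.id_comp _))
      (fun f => by ext; exact (Category.comp_id _).trans (Category.id_comp _).symm))

variable [HasPullbacks C]

noncomputable def pullbackCounitCompPostMapInverseIso (i : x ⟶ y) (b : Over y) :
    Over.pullback ((Over.mapPullbackAdj i).counit.app b) ⋙
        (postMapEquiv i ((Over.pullback i).obj b)).inverse ≅
      Over.post (Over.pullback i) :=
  ((postMapEquiv i _).toAdjunction.comp (Over.mapPullbackAdj _)).rightAdjointUniq
    (Over.postAdjunctionRight (Over.mapPullbackAdj i))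

end CategoryTheory.Over

/-- generalized Hoyer Lemma 2.3.5.  Let `C` be locally cartesian closed,
`i : x ⟶ y`, and `b ∈ C/y`.  For any dependent-product functors `Π_i` (right adjoint to `i^*`)
and `Π_{ε^ind_b}` (right adjoint to pullback along the counit `ε^ind_b : Σ_i i^* b ⟶ b`),
the functors `Π_{ε^ind_b} ∘ (Σ_i / i^* b)` and `(η^coind_b)^* ∘ (Π_i / i^* b)`,
from `(C/x)/(i^* b)` to `(C/y)/b`, are naturally isomorphic. -/
theorem stmt_18 {C : Type u} [Category.{v} C] [HasPullbacks C]
    [∀ x : C, CartesianMonoidalCategory (Over x)] [∀ x : C, MonoidalClosed (Over x)]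
    {x y : C} (i : x ⟶ y) (b : Over y)
    (Pi : Over x ⥤ Over y) (adjPi : Over.pullback i ⊣ Pi)
    (PiEps : Over ((Over.map i).obj ((Over.pullback i).obj b)) ⥤ Over b)
    (adjEps : Over.pullback ((Over.mapPullbackAdj i).counit.app b) ⊣ PiEps) :
    Nonempty
      ((Over.post (Over.map i) (X := (Over.pullback i).obj b) ⋙ PiEps) ≅
        (Over.post Pi (X := (Over.pullback i).obj b) ⋙ Over.pullback (adjPi.unit.app b))) := by
  let adjLeft : Over.post (Over.pullback i) ⊣ Over.post (Over.map i) ⋙ PiEps :=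
    (adjEps.comp (Over.postMapEquiv i _).symm.toAdjunction).ofNatIsoLeft
      (Over.pullbackCounitCompPostMapInverseIso i b)
  exact ⟨adjLeft.rightAdjointUniq (Over.postAdjunctionLeft adjPi)⟩
end
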